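/- A k-internal out-tree T is minimal (i.e., no proper subtree of T is a k-internal out-tree) if and only if T has exactly k internal vertices and every leaf u of T is the unique out-neighbor (child) of its in-neighbor (parent) in T. -/
import Mathlib


open scoped Classical

/-- The arc relation of a digraph restricted to a vertex set `S`. -/
def rarc {V : Type*} (arc : V → V → Prop) (S : Finset V) (u v : V) : Prop :=
  arc u v ∧ u ∈ S ∧ v ∈ S

/-- The subdigraph induced by `arc` on `S` is an out-tree (arborescence) rooted at `r`:
`r ∈ S`, `r` has no in-arc, every other vertex of `S` has exactly one in-arc,
and every vertex of `S` is reachable from `r`. -/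
def IsOutTreeOn {V : Type*} (arc : V → V → Prop) (S : Finset V) (r : V) : Prop :=
  r ∈ S ∧ (∀ u, ¬ rarc arc S u r) ∧
  (∀ v ∈ S, v ≠ r → ∃! u, rarc arc S u v) ∧
  (∀ v ∈ S, Relation.ReflTransGen (rarc arc S) r v)

/-- The number of internal vertices (vertices of positive out-degree) of the
subdigraph induced by `arc` on `S`. -/
noncomputable def internalCount {V : Type*} (arc : V → V → Prop) (S : Finset V) : ℕ :=
  (S.filter fun v => ∃ w, rarc arc S v w).card

/-- `v` is a leaf (out-degree zero) of the subdigraph induced by `arc` on `S`. -/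
def IsLeafOn {V : Type*} (arc : V → V → Prop) (S : Finset V) (v : V) : Prop :=
  v ∈ S ∧ ∀ w, ¬ rarc arc S v w

private lemma internalCount_eq {V : Type*} [Fintype V] [DecidableEq V]
    (arc : V → V → Prop) (S : Finset V) :
    internalCount arc S = (S.filter fun v => ∃ w, rarc arc S v w).card := by
  unfold internalCount
  congr 1
  exact Finset.filter_congr_decidable _ _ _

/-- Removing a non-root leaf from an out-tree on `univ` gives an out-tree. -/
private lemma erase_leaf_outtree {V : Type*} [Fintype V] [DecidableEq V]
    {arc : V → V → Prop} {r u : V}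
    (hT : IsOutTreeOn arc Finset.univ r) (hu : IsLeafOn arc Finset.univ u) (hur : u ≠ r) :
    IsOutTreeOn arc (Finset.univ.erase u) r := by
  obtain ⟨hr, hroot, huniq, hreach⟩ := hT
  obtain ⟨-, huleaf⟩ := hu
  refine ⟨Finset.mem_erase.mpr ⟨Ne.symm hur, hr⟩, ?_, ?_, ?_⟩
  · intro q hq
    exact hroot q ⟨hq.1, Finset.mem_univ _, Finset.mem_univ _⟩
  · intro v hv hvr
    obtain ⟨hvu, -⟩ := Finset.mem_erase.mp hv
    obtain ⟨p, hp, hpu⟩ := huniq v (Finset.mem_univ v) hvr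
    have hpne : p ≠ u := fun h => huleaf v (h ▸ hp)
    refine ⟨p, ⟨hp.1, Finset.mem_erase.mpr ⟨hpne, Finset.mem_univ _⟩,
      Finset.mem_erase.mpr ⟨hvu, Finset.mem_univ _⟩⟩, ?_⟩
    intro q hq
    exact hpu q ⟨hq.1, Finset.mem_univ _, Finset.mem_univ _⟩
  · have key : ∀ v, Relation.ReflTransGen (rarc arc Finset.univ) r v → v ≠ u →
        Relation.ReflTransGen (rarc arc (Finset.univ.erase u)) r v := by
      intro v h
      induction h with
      | refl => intro _; exact .refl
      | @tail b c h1 h2 ih =>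
        intro hcu
        have hbu : b ≠ u := fun h => huleaf c (h ▸ h2)
        exact (ih hbu).tail ⟨h2.1, Finset.mem_erase.mpr ⟨hbu, Finset.mem_univ _⟩,
          Finset.mem_erase.mpr ⟨hcu, Finset.mem_univ _⟩⟩
    intro v hv
    exact key v (hreach v (Finset.mem_univ v)) (Finset.mem_erase.mp hv).1

/-- Every finite out-tree has a leaf. -/
private lemma exists_leaf {V : Type*} [Fintype V] [DecidableEq V]
    {arc : V → V → Prop} {r : V} (hT : IsOutTreeOn arc Finset.univ r) :
    ∃ u, IsLeafOn arc Finset.univ u := by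
  obtain ⟨hr, hroot, huniq, hreach⟩ := hT
  by_contra h
  push_neg at h
  simp only [IsLeafOn, not_and, not_forall, not_not] at h
  have h' : ∀ u : V, ∃ w, rarc arc Finset.univ u w := fun u => h u (Finset.mem_univ u)
  choose g hg using h'
  have hmaps : ∀ a ∈ (Finset.univ : Finset V), g a ∈ Finset.univ.erase r := by
    intro a _
    refine Finset.mem_erase.mpr ⟨fun hh => hroot a (hh ▸ hg a), Finset.mem_univ _⟩
  have hinj : Set.InjOn g (Finset.univ : Finset V) := by
    intro a _ b _ hab
    have hgr : g a ≠ r := fun hh => hroot a (hh ▸ hg a)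
    obtain ⟨p, hp, hpu⟩ := huniq (g a) (Finset.mem_univ _) hgr
    have h1 : a = p := hpu a (hg a)
    have h2 : b = p := hpu b (hab ▸ hg b)
    exact h1.trans h2.symm
  have hcard := Finset.card_le_card_of_injOn g hmaps hinj
  have hlt : (Finset.univ.erase r).card < Finset.univ.card :=
    Finset.card_erase_lt_of_mem hr
  omega

/-- A `k`-internal out-tree `T` is minimal (no proper subtree is a
`k`-internal out-tree) iff it has exactly `k` internal vertices and every leaf is the
unique child of its parent. -/
theorem stmt_6 {V : Type*} [Fintype V] [DecidableEq V]
    (arc : V → V → Prop) (r : V) (k : ℕ)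
    (hT : IsOutTreeOn arc Finset.univ r)
    (hk : k ≤ internalCount arc Finset.univ) :
    (¬ ∃ (S : Finset V) (r' : V), S ≠ Finset.univ ∧ IsOutTreeOn arc S r' ∧
        k ≤ internalCount arc S) ↔
    (internalCount arc Finset.univ = k ∧
      ∀ u, IsLeafOn arc Finset.univ u →
        ∀ p, arc p u → ∀ w, arc p w → w = u) := by
  obtain ⟨hr, hroot, huniq, hreach⟩ := id hT
  have herase_ne : ∀ u : V, Finset.univ.erase u ≠ Finset.univ := by
    intro u h
    have : u ∈ Finset.univ.erase u := h.symm ▸ Finset.mem_univ u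
    exact (Finset.mem_erase.mp this).1 rfl
  constructor
  · intro hmin
    constructor
    · -- exactly k internal vertices
      by_contra hne
      have hgt : k + 1 ≤ internalCount arc Finset.univ := lt_of_le_of_ne hk (Ne.symm hne)
      obtain ⟨u, hu⟩ := exists_leaf hT
      -- u ≠ r : otherwise V = {r} and internalCount = 0
      have hur : u ≠ r := by
        intro hurr
        subst hurr
        have hpos : 0 < (Finset.univ.filter fun v => ∃ w, rarc arc Finset.univ v w).card := by
          rw [← internalCount_eq]; omega
        obtain ⟨v, hv⟩ := Finset.card_pos.mp hpos
        obtain ⟨-, c, hc⟩ := Finset.mem_filter.mp hv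
        rcases Relation.ReflTransGen.cases_head (hreach v (Finset.mem_univ v)) with h | ⟨d, hd, -⟩
        · exact hu.2 c (h ▸ hc)
        · exact hu.2 d hd
      obtain ⟨p, hp, hpu⟩ := huniq u (Finset.mem_univ u) hur
      have hsub : (Finset.univ.filter fun v => ∃ w, rarc arc Finset.univ v w).erase p ⊆
          (Finset.univ.erase u).filter fun v => ∃ w, rarc arc (Finset.univ.erase u) v w := by
        intro q hq
        obtain ⟨hqp, hqf⟩ := Finset.mem_erase.mp hq
        obtain ⟨-, c, hc⟩ := Finset.mem_filter.mp hqf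
        have hqu : q ≠ u := fun h => hu.2 c (h ▸ hc)
        have hcu : c ≠ u := fun h => hqp (hpu q (h ▸ hc))
        exact Finset.mem_filter.mpr ⟨Finset.mem_erase.mpr ⟨hqu, Finset.mem_univ _⟩,
          c, hc.1, Finset.mem_erase.mpr ⟨hqu, Finset.mem_univ _⟩,
          Finset.mem_erase.mpr ⟨hcu, Finset.mem_univ _⟩⟩
      refine hmin ⟨Finset.univ.erase u, r, herase_ne u, erase_leaf_outtree hT hu hur, ?_⟩
      have h1 := Finset.card_le_card hsub
      have h2 : (Finset.univ.filter fun v => ∃ w, rarc arc Finset.univ v w).card - 1 ≤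
          ((Finset.univ.filter fun v => ∃ w, rarc arc Finset.univ v w).erase p).card :=
        Finset.pred_card_le_card_erase
      rw [internalCount_eq] at hgt ⊢
      omega
    · -- every leaf is an only child
      intro u hu p hpu w hpw
      by_contra hwu
      have hur : u ≠ r := by
        intro hurr
        subst hurr
        exact hroot p ⟨hpu, Finset.mem_univ _, Finset.mem_univ _⟩
      obtain ⟨q, hq, hqu⟩ := huniq u (Finset.mem_univ u) hur
      have hpq : p = q := hqu p ⟨hpu, Finset.mem_univ _, Finset.mem_univ _⟩
      have hpne : p ≠ u := by
        intro h
        subst h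
        exact hu.2 p ⟨hpu, Finset.mem_univ _, Finset.mem_univ _⟩
      have hsub : (Finset.univ.filter fun v => ∃ w, rarc arc Finset.univ v w) ⊆
          (Finset.univ.erase u).filter fun v => ∃ w, rarc arc (Finset.univ.erase u) v w := by
        intro a ha
        obtain ⟨-, c, hc⟩ := Finset.mem_filter.mp ha
        have hau : a ≠ u := fun h => hu.2 c (h ▸ hc)
        by_cases hcu : c = u
        · -- then a is u's parent, i.e. a = p; use w instead
          have hap : a = p := (hqu a (hcu ▸ hc)).trans hpq.symm
          refine Finset.mem_filter.mpr ⟨Finset.mem_erase.mpr ⟨hau, Finset.mem_univ _⟩,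
            w, hap ▸ hpw, Finset.mem_erase.mpr ⟨hau, Finset.mem_univ _⟩,
            Finset.mem_erase.mpr ⟨hwu, Finset.mem_univ _⟩⟩
        · exact Finset.mem_filter.mpr ⟨Finset.mem_erase.mpr ⟨hau, Finset.mem_univ _⟩,
            c, hc.1, Finset.mem_erase.mpr ⟨hau, Finset.mem_univ _⟩,
            Finset.mem_erase.mpr ⟨hcu, Finset.mem_univ _⟩⟩
      refine hmin ⟨Finset.univ.erase u, r, herase_ne u, erase_leaf_outtree hT hu hur, ?_⟩
      have h1 := Finset.card_le_card hsub
      rw [internalCount_eq] at hk ⊢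
      omega
  · rintro ⟨hcount, hleaf⟩ ⟨S, r', hSne, ⟨hr'S, hr'no, hSuniq, hSreach⟩, hSk⟩
    -- internal vertices of S are internal in univ
    have hsub : (S.filter fun v => ∃ w, rarc arc S v w) ⊆
        Finset.univ.filter fun v => ∃ w, rarc arc Finset.univ v w := by
      intro v hv
      obtain ⟨hvS, c, hc⟩ := Finset.mem_filter.mp hv
      exact Finset.mem_filter.mpr ⟨Finset.mem_univ _,
        c, hc.1, Finset.mem_univ _, Finset.mem_univ _⟩
    have heq : (S.filter fun v => ∃ w, rarc arc S v w) =
        Finset.univ.filter fun v => ∃ w, rarc arc Finset.univ v w := by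
      refine Finset.eq_of_subset_of_card_le hsub ?_
      rw [internalCount_eq] at hcount hSk
      omega
    obtain ⟨x, hxS⟩ : ∃ x, x ∉ S := by
      by_contra h
      push_neg at h
      exact hSne (Finset.eq_univ_iff_forall.mpr h)
    -- x is a leaf of univ
    have hxleaf : IsLeafOn arc Finset.univ x := by
      refine ⟨Finset.mem_univ _, fun c hc => ?_⟩
      have hx : x ∈ Finset.univ.filter fun v => ∃ w, rarc arc Finset.univ v w :=
        Finset.mem_filter.mpr ⟨Finset.mem_univ _, c, hc⟩
      rw [← heq] at hx
      exact hxS (Finset.mem_filter.mp hx).1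
    -- x ≠ r
    have hxr : x ≠ r := by
      intro hxr
      subst hxr
      have hall : ∀ v : V, v = x := by
        intro v
        rcases Relation.ReflTransGen.cases_head (hreach v (Finset.mem_univ v)) with h | ⟨d, hd, -⟩
        · exact h.symm
        · exact absurd hd (hxleaf.2 d)
      exact hxS (hall r' ▸ hr'S)
    obtain ⟨p, hp, hpu⟩ := huniq x (Finset.mem_univ x) hxr
    -- p is internal in univ hence in S, and internal in S
    have hpfilter : p ∈ Finset.univ.filter fun v => ∃ w, rarc arc Finset.univ v w :=
      Finset.mem_filter.mpr ⟨Finset.mem_univ _, x, hp⟩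
    rw [← heq] at hpfilter
    obtain ⟨-, c, hc⟩ := Finset.mem_filter.mp hpfilter
    have : c = x := hleaf x hxleaf p hp.1 c hc.1
    exact hxS (this ▸ hc.2.2)
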